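/- Let A be a Stone distributive nearlattice. If a ∧ b exists in A, then (a ∧ b)⊤⊤ = a⊤⊤ ⋎ b⊤⊤. -/
import Mathlib


/-- A distributive nearlattice, presented (following Araújo–Kinyon) as a
join-semilattice with top together with its canonical ternary operation
`m x y z = (x ⊔ z) ⊓_z (y ⊔ z)` (the meet taken in the principal filter `[z)`),
satisfying the Araújo–Kinyon identities.  This is equivalent to: every
principal filter is a bounded distributive lattice. -/
class DNearlattice (A : Type*) extends SemilatticeSup A, OrderTop A where
  m : A → A → A → A
  sup_eq_m : ∀ x y : A, x ⊔ y = m x x y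
  m_ax2 : ∀ x y : A, m x y x = x
  m_ax3 : ∀ u w x y z : A,
    m (m x y z) (m y (m u x z) z) w = m w w (m y (m x u z) z)
  m_ax4 : ∀ w x y z : A,
    m x (m y y z) w = m (m x y w) (m x y w) (m x z w)

variable {A : Type*} [DNearlattice A]

/-- The annihilator `a⊤ = {x | x ⊔ a = ⊤}`. -/
def ann (a : A) : Set A := {x : A | x ⊔ a = ⊤}

/-- The annihilator of a set (filter): `F⊤ = {x | ∀ f ∈ F, x ⊔ f = ⊤}`. -/
def annF (F : Set A) : Set A := {x : A | ∀ f ∈ F, x ⊔ f = ⊤}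

/-- The double annihilator `a⊤⊤`. -/
def dann (a : A) : Set A := annF (ann a)

/-- A filter: contains `⊤`, is upward closed, and is closed under existing
binary meets (greatest lower bounds). -/
def IsFil (F : Set A) : Prop :=
  ⊤ ∈ F ∧ (∀ a b : A, a ≤ b → a ∈ F → b ∈ F) ∧
    (∀ a b c : A, a ∈ F → b ∈ F → IsGLB {a, b} c → c ∈ F)

/-- The filter generated by a set: the intersection of all filters containing it. -/
def filGen (X : Set A) : Set A := ⋂₀ {F : Set A | IsFil F ∧ X ⊆ F}

/-- The join of two filters in the lattice of filters. -/
def filJoin (F G : Set A) : Set A := filGen (F ∪ G)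

/-- An ideal: downward closed and closed under joins. -/
def IsIdl (I : Set A) : Prop :=
  (∀ a b : A, a ≤ b → b ∈ I → a ∈ I) ∧ (∀ a b : A, a ∈ I → b ∈ I → a ⊔ b ∈ I)

/-- A prime ideal: a nonempty proper ideal such that whenever an existing
meet `a ∧ b` lies in it, `a` or `b` lies in it. -/
def IsPrimeIdl (P : Set A) : Prop :=
  IsIdl P ∧ P.Nonempty ∧ P ≠ Set.univ ∧
    (∀ a b c : A, IsGLB {a, b} c → c ∈ P → a ∈ P ∨ b ∈ P)

/-- A maximal ideal: a nonempty proper ideal maximal among proper ideals. -/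
def IsMaxIdl (I : Set A) : Prop :=
  IsIdl I ∧ I.Nonempty ∧ I ≠ Set.univ ∧
    (∀ J : Set A, IsIdl J → I ⊆ J → J = I ∨ J = Set.univ)

/-- A prime filter: `a ⊔ b ∈ F` implies `a ∈ F` or `b ∈ F`. -/
def IsPrimeFil (F : Set A) : Prop :=
  IsFil F ∧ ∀ a b : A, a ⊔ b ∈ F → a ∈ F ∨ b ∈ F

/-- An α-filter: a filter containing `a⊤⊤` for each of its elements `a`. -/
def IsAlphaFil (F : Set A) : Prop := IsFil F ∧ ∀ a ∈ F, dann a ⊆ F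

/-- An α-ideal: an ideal `I` such that `I ∩ a⊤⊤ ≠ ∅` implies `a ∈ I`. -/
def IsAlphaIdl (I : Set A) : Prop :=
  IsIdl I ∧ ∀ a : A, (I ∩ dann a).Nonempty → a ∈ I

/-- Quasicomplemented: every `a⊤⊤` is of the form `b⊤`. -/
def Quasicomplemented (B : Type*) [DNearlattice B] : Prop :=
  ∀ a : B, ∃ b : B, dann a = ann b

/-- Normal: `(a ⊔ b)⊤ = a⊤ ⋎ b⊤` for all `a, b`. -/
def NormalNL (B : Type*) [DNearlattice B] : Prop :=
  ∀ a b : B, ann (a ⊔ b) = filJoin (ann a) (ann b)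

/-- Stone: `a⊤ ⋎ a⊤⊤ = A` for all `a`. -/
def StoneNL (B : Type*) [DNearlattice B] : Prop :=
  ∀ a : B, filJoin (ann a) (dann a) = Set.univ


open DNearlattice

lemma msup (x y : A) : m x x y = x ⊔ y := (sup_eq_m x y).symm

lemma m_zz (x z : A) : m x z z = z := by
  have hB : m x z z ≤ z := by
    have h := m_ax3 (A := A) z z z x z
    rw [m_ax2, m_ax2, msup, msup, sup_idem] at h
    exact sup_eq_left.mp h.symm
  have hA : z ≤ m x z z := by
    have h := m_ax3 (A := A) x (m x z z) x z z
    rw [m_ax2, m_ax2, msup] at h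
    exact sup_eq_left.mp h.symm
  exact le_antisymm hB hA

lemma mE2 (x y z u : A) : m y (m x u z) z ≤ m x y z := by
  have h := m_ax3 (A := A) u (m x y z) x y z
  rw [m_ax2, msup] at h
  exact sup_eq_left.mp h.symm

lemma le_m (x y z : A) : z ≤ m x y z := by
  have h := mE2 (A := A) x y z z
  rwa [m_zz, m_zz] at h

lemma ax4' (x y z w : A) : m x (y ⊔ z) w = m x y w ⊔ m x z w := by
  rw [sup_eq_m y z, m_ax4, msup]

lemma m_comm (x y z : A) : m x y z = m y x z := by
  have key : ∀ a b : A, m b a z ≤ m a b z := by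
    intro a b
    have h := mE2 (A := A) a b z a
    rw [msup, ax4', m_zz] at h
    exact le_trans le_sup_left h
  exact le_antisymm (key y x) (key x y)

lemma m_mself (x y z : A) : m x (m x y z) z = m x y z := by
  have h1 : m x (m x y z) z ≤ m x y z := by
    have h := mE2 (A := A) y x z x
    rwa [m_comm y x z] at h

  have h2 : m x y z ≤ m x (m x y z) z := by
    have h := m_ax3 (A := A) y (m x (m x y z) z) x (m x y z) z
    rw [m_ax2, msup, msup, sup_eq_left.mpr (le_m x y z)] at h
    exact sup_eq_left.mp h.symm
  exact le_antisymm h1 h2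

lemma m_le_left (x y z : A) : m x y z ≤ x ⊔ z := by
  have h := m_ax3 (A := A) y (x ⊔ z) x x z
  rw [msup x z, m_ax2, msup (x ⊔ z), m_mself] at h
  exact sup_eq_left.mp h.symm

lemma m_le_right (x y z : A) : m x y z ≤ y ⊔ z := m_comm x y z ▸ m_le_left y x z

lemma m_absorb_right (x y z : A) : m x (y ⊔ z) z = m x y z := by
  rw [ax4', m_zz, sup_eq_left.mpr (le_m x y z)]

lemma m_absorb_left (x y z : A) : m (x ⊔ z) y z = m x y z := by
  rw [m_comm, m_absorb_right, m_comm]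

lemma m_ge (w x y z : A) (h1 : w ≤ x ⊔ z) (h2 : w ≤ y ⊔ z) : w ≤ m x y z := by
  rw [← m_absorb_left, ← m_absorb_right]
  set X := x ⊔ z with hX
  set Y := y ⊔ z with hY
  have s1 : w ≤ m w Y z := by
    have h := ax4' (A := A) w w Y z
    rw [sup_eq_right.mpr h2, msup] at h
    calc w ≤ (w ⊔ z) ⊔ m w Y z := le_sup_left.trans le_sup_left
    _ = m w Y z := h.symm
  have s2 : m Y w z ≤ m Y X z := by
    have h := ax4' (A := A) Y w X z
    rw [sup_eq_right.mpr h1] at h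
    exact le_sup_left.trans h.ge
  calc w ≤ m w Y z := s1
  _ = m Y w z := m_comm w Y z
  _ ≤ m Y X z := s2
  _ = m X Y z := m_comm Y X z

lemma m_isGLB (x y z : A) : IsGLB {x ⊔ z, y ⊔ z} (m x y z) := by
  constructor
  · rintro t (rfl | rfl)
    · exact m_le_left x y z
    · exact m_le_right x y z
  · intro w hw
    exact m_ge w x y z (hw (Set.mem_insert _ _)) (hw (Set.mem_insert_of_mem _ rfl))

lemma glb_m_eq (g h x y : A) (hglb : IsGLB {g, h} x) : m g h y = x ⊔ y := by
  have hxg : x ≤ g := hglb.1 (Set.mem_insert _ _)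
  have hxh : x ≤ h := hglb.1 (Set.mem_insert_of_mem _ rfl)
  refine le_antisymm ?_ (m_ge _ g h y (sup_le_sup_right hxg y) (sup_le_sup_right hxh y))
  have e1 : m g h y = m (g ⊔ y) (h ⊔ y) x := by
    have h1 := m_isGLB (A := A) g h y
    have h2 := m_isGLB (A := A) (g ⊔ y) (h ⊔ y) x
    rw [sup_eq_left.mpr (hxg.trans le_sup_left), sup_eq_left.mpr (hxh.trans le_sup_left)] at h2
    exact h1.unique h2
  have e2 : m h g x = x := by
    have h2 := m_isGLB (A := A) h g x
    rw [sup_eq_left.mpr hxh, sup_eq_left.mpr hxg, Set.pair_comm] at h2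
    exact h2.unique hglb
  rw [e1, ax4', m_comm (g ⊔ y) h x, ax4', e2]
  have b1 : m h y x ≤ x ⊔ y := (m_le_right h y x).trans (by rw [sup_comm])
  have b2 : m (g ⊔ y) y x ≤ x ⊔ y := (m_le_right _ y x).trans (by rw [sup_comm])
  exact sup_le (sup_le le_sup_left b1) b2


section Filters

variable {F G H : Set A}

lemma isFil_annF (S : Set A) : IsFil (annF (A := A) S) := by
  refine ⟨fun f _ => top_sup_eq f, fun a b hab ha f hf => ?_, fun u v c hu hv hglb f hf => ?_⟩
  · exact le_antisymm le_top ((ha f hf).symm.trans_le (sup_le_sup_right hab f))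
  · have h1 : (⊤ : A) ≤ m u v f := m_ge ⊤ u v f (hu f hf).ge (hv f hf).ge
    rw [glb_m_eq u v c f hglb] at h1
    exact le_antisymm le_top h1

lemma ann_eq_annF (a : A) : ann a = annF {a} := by
  ext x; simp [ann, annF]

lemma isFil_ann (a : A) : IsFil (ann (A := A) a) := by
  rw [ann_eq_annF]; exact isFil_annF _

lemma isFil_dann (a : A) : IsFil (dann (A := A) a) := isFil_annF _

lemma ann_mono {c a : A} (h : c ≤ a) : ann c ⊆ ann a := fun x hx =>
  le_antisymm le_top (hx.ge.trans (sup_le_sup_left h x))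

lemma annF_antitone (h : F ⊆ G) : annF G ⊆ annF F := fun x hx f hf => hx f (h hf)

lemma dann_antitone {c a : A} (h : c ≤ a) : dann a ⊆ dann c := annF_antitone (ann_mono h)

lemma ann_glb {a b c : A} (hc : IsGLB {a, b} c) : ann c = ann a ∩ ann b := by
  have hca : c ≤ a := hc.1 (Set.mem_insert _ _)
  have hcb : c ≤ b := hc.1 (Set.mem_insert_of_mem _ rfl)
  refine Set.Subset.antisymm (Set.subset_inter (ann_mono hca) (ann_mono hcb)) ?_
  rintro x ⟨hxa, hxb⟩
  have h1 : (⊤ : A) ≤ m a b x := m_ge ⊤ a b x (by rw [sup_comm]; exact hxa.ge)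
    (by rw [sup_comm]; exact hxb.ge)
  rw [glb_m_eq a b c x hc] at h1
  show x ⊔ c = ⊤
  rw [sup_comm]
  exact le_antisymm le_top h1

lemma isFil_inter (hF : IsFil F) (hG : IsFil G) : IsFil (F ∩ G) :=
  ⟨⟨hF.1, hG.1⟩, fun a b hab ha => ⟨hF.2.1 a b hab ha.1, hG.2.1 a b hab ha.2⟩,
    fun a b c ha hb hglb => ⟨hF.2.2 a b c ha.1 hb.1 hglb, hG.2.2 a b c ha.2 hb.2 hglb⟩⟩

lemma subset_filGen (X : Set A) : X ⊆ filGen X := fun x hx K hK => hK.2 hx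

lemma filGen_subset {X : Set A} (hF : IsFil F) (hX : X ⊆ F) : filGen X ⊆ F :=
  fun _ hx => hx F ⟨hF, hX⟩

lemma isFil_filGen (X : Set A) : IsFil (filGen X) := by
  refine ⟨fun K hK => hK.1.1, fun a b hab ha K hK => hK.1.2.1 a b hab (ha K hK),
    fun a b c ha hb hglb K hK => hK.1.2.2 a b c (ha K hK) (hb K hK) hglb⟩

lemma filGen_mono {X Y : Set A} (h : X ⊆ Y) : filGen X ⊆ filGen Y :=
  fun x hx K hK => hx K ⟨hK.1, h.trans hK.2⟩

lemma subset_filJoin_left : G ⊆ filJoin G H :=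
  (Set.subset_union_left).trans (subset_filGen _)

lemma subset_filJoin_right : H ⊆ filJoin G H :=
  (Set.subset_union_right).trans (subset_filGen _)

lemma filJoin_subset (hF : IsFil F) (hG : G ⊆ F) (hH : H ⊆ F) : filJoin G H ⊆ F :=
  filGen_subset hF (Set.union_subset hG hH)

lemma isFil_filJoin : IsFil (filJoin G H) := isFil_filGen _

lemma filJoin_mono {G' H' : Set A} (hG : G ⊆ G') (hH : H ⊆ H') :
    filJoin G H ⊆ filJoin G' H' := filGen_mono (Set.union_subset_union hG hH)

/-- Concrete description of the join of two filters. -/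
def Jset (G H : Set A) : Set A := {x | ∃ g ∈ G, ∃ h ∈ H, IsGLB {g, h} x}

lemma isGLB_pair_top (x : A) : IsGLB {x, ⊤} x :=
  ⟨by rintro t (rfl | rfl); exacts [le_rfl, le_top],
   fun w hw => hw (Set.mem_insert _ _)⟩

lemma mem_filJoin_of_glb {g h x : A} (hg : g ∈ G) (hh : h ∈ H) (hglb : IsGLB {g, h} x) :
    x ∈ filJoin G H := fun K hK =>
  hK.1.2.2 g h x (hK.2 (Set.mem_union_left _ hg)) (hK.2 (Set.mem_union_right _ hh)) hglb

lemma isFil_Jset (hG : IsFil G) (hH : IsFil H) : IsFil (Jset G H) := by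
  refine ⟨⟨⊤, hG.1, ⊤, hH.1, isGLB_pair_top ⊤⟩, ?_, ?_⟩
  · rintro x y hxy ⟨g, hg, h, hh, hglb⟩
    refine ⟨g ⊔ y, hG.2.1 g _ le_sup_left hg, h ⊔ y, hH.2.1 h _ le_sup_left hh, ?_⟩
    have h1 := m_isGLB (A := A) g h y
    rwa [glb_m_eq g h x y hglb, sup_eq_right.mpr hxy] at h1
  · rintro x x' z ⟨g, hg, h, hh, hx⟩ ⟨g', hg', h', hh', hx'⟩ hz
    have hzx : z ≤ x := hz.1 (Set.mem_insert _ _)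
    have hzx' : z ≤ x' := hz.1 (Set.mem_insert_of_mem _ rfl)
    refine ⟨m g g' z, hG.2.2 (g ⊔ z) (g' ⊔ z) _
        (hG.2.1 g _ le_sup_left hg) (hG.2.1 g' _ le_sup_left hg') (m_isGLB g g' z),
      m h h' z, hH.2.2 (h ⊔ z) (h' ⊔ z) _
        (hH.2.1 h _ le_sup_left hh) (hH.2.1 h' _ le_sup_left hh') (m_isGLB h h' z), ?_⟩
    constructor
    · rintro t (rfl | rfl); exacts [le_m g g' z, le_m h h' z]
    · intro w hw
      have hwg := hw (Set.mem_insert _ _)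
      have hwh := hw (Set.mem_insert_of_mem _ rfl)
      have hwx : w ≤ x := by
        have : w ≤ m g h z := m_ge w g h z (hwg.trans (m_le_left g g' z))
          (hwh.trans (m_le_left h h' z))
        rwa [glb_m_eq g h x z hx, sup_eq_left.mpr hzx] at this
      have hwx' : w ≤ x' := by
        have : w ≤ m g' h' z := m_ge w g' h' z (hwg.trans (m_le_right g g' z))
          (hwh.trans (m_le_right h h' z))
        rwa [glb_m_eq g' h' x' z hx', sup_eq_left.mpr hzx'] at this
      exact hz.2 (by rintro t (rfl | rfl); exacts [hwx, hwx'])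

lemma filJoin_subset_Jset (hG : IsFil G) (hH : IsFil H) : filJoin G H ⊆ Jset G H :=
  filGen_subset (isFil_Jset hG hH)
    (Set.union_subset (fun g hg => ⟨g, hg, ⊤, hH.1, isGLB_pair_top g⟩)
      (fun h hh => ⟨⊤, hG.1, h, hh, by rw [Set.pair_comm]; exact isGLB_pair_top h⟩))

lemma fil_distrib (hF : IsFil F) (hG : IsFil G) (hH : IsFil H) :
    F ∩ filJoin G H ⊆ filJoin (F ∩ G) (F ∩ H) := by
  rintro x ⟨hxF, hxJ⟩
  obtain ⟨g, hg, h, hh, hglb⟩ := filJoin_subset_Jset hG hH hxJ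
  have hxg : x ≤ g := hglb.1 (Set.mem_insert _ _)
  have hxh : x ≤ h := hglb.1 (Set.mem_insert_of_mem _ rfl)
  have hglb' : IsGLB {g ⊔ x, h ⊔ x} x := by
    have h1 := m_isGLB (A := A) g h x
    rwa [glb_m_eq g h x x hglb, sup_idem] at h1
  exact mem_filJoin_of_glb
    ⟨hF.2.1 x _ le_sup_right hxF, hG.2.1 g _ le_sup_left hg⟩
    ⟨hF.2.1 x _ le_sup_right hxF, hH.2.1 h _ le_sup_left hh⟩ hglb'

end Filters


/-- In a Stone distributive nearlattice, `(a ∧ b)⊤⊤ = a⊤⊤ ⋎ b⊤⊤` whenever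
the meet `a ∧ b` exists. -/
theorem stmt15 (hs : StoneNL A) (a b c : A) (hc : IsGLB {a, b} c) :
    dann c = filJoin (dann a) (dann b) := by
  have hca : c ≤ a := hc.1 (Set.mem_insert _ _)
  have hcb : c ≤ b := hc.1 (Set.mem_insert_of_mem _ rfl)
  have hDc := isFil_dann c
  have hT : IsFil (filJoin (dann a) (dann b)) := isFil_filJoin
  apply Set.Subset.antisymm
  · intro x hx
    have h1 : x ∈ filJoin (dann c ∩ ann a) (dann c ∩ dann a) :=
      fil_distrib hDc (isFil_ann a) (isFil_dann a)
        ⟨hx, by rw [hs a]; trivial⟩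
    have k2 : dann c ∩ dann a ⊆ filJoin (dann a) (dann b) :=
      (Set.inter_subset_right).trans subset_filJoin_left
    have k1 : dann c ∩ ann a ⊆ filJoin (dann a) (dann b) := by
      intro y hy
      have h2 : y ∈ filJoin ((dann c ∩ ann a) ∩ ann b) ((dann c ∩ ann a) ∩ dann b) :=
        fil_distrib (isFil_inter hDc (isFil_ann a)) (isFil_ann b) (isFil_dann b)
          ⟨hy, by rw [hs b]; trivial⟩
      have e1 : (dann c ∩ ann a) ∩ ann b ⊆ filJoin (dann a) (dann b) := by
        rintro t ⟨⟨ht1, ht2⟩, ht3⟩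
        have htc : t ∈ ann c := by rw [ann_glb hc]; exact ⟨ht2, ht3⟩
        have ht : t = ⊤ := by
          have h4 := ht1 t htc
          rwa [sup_idem] at h4
        rw [ht]; exact hT.1
      have e2 : (dann c ∩ ann a) ∩ dann b ⊆ filJoin (dann a) (dann b) :=
        (Set.inter_subset_right).trans subset_filJoin_right
      exact filJoin_subset hT e1 e2 h2
    exact filJoin_subset hT k1 k2 h1
  · exact filJoin_subset hDc (dann_antitone hca) (dann_antitone hcb)
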